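/- arXiv:0903.2512 — 2 statements merged into one kernel-verified Lean document; each statement's English description precedes it below -/
import Mathlib

section
/- Jacobian of the quadratic change of variables (eq. MLE.2): fix ξ ∈ ℂ with ξ ≠ 0. For every N×N complex matrix M such that ξ·I − M is invertible, the map F(M) = (ξ·I − M)⁻¹ − ξ⁻¹·I is differentiable at M and its divergence satisfies div F(M) = ( tr((ξ·I − M)⁻¹) )². -/
/-! The derivative of `X ↦ (ξ - X)⁻¹` is `H ↦ B H B` with `B = (ξ - M)⁻¹`, and the divergence
picks out the entries `(B E_{ij} B)_{ij} = B_{ii} B_{jj}`, which sum to `(tr B)²`. -/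

open Matrix

attribute [local instance] Matrix.normedAddCommGroup Matrix.normedSpace

/-- The divergence of a map `F` on `N×N` complex matrices at `M`:
`div F (M) = ∑_{i,j} (D F_{ij})(M)[E_{ij}]`, where `E_{ij}` is the elementary matrix. -/
noncomputable def matrixDivergence {N : ℕ}
    (F : Matrix (Fin N) (Fin N) ℂ → Matrix (Fin N) (Fin N) ℂ)
    (M : Matrix (Fin N) (Fin N) ℂ) : ℂ :=
  ∑ i : Fin N, ∑ j : Fin N,
    fderiv ℂ (fun X => F X i j) M (Matrix.single i j (1 : ℂ))

namespace Matrix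

variable {n α : Type*} [Fintype n] [DecidableEq n]

theorem mul_single_one_mul_apply_same [CommSemiring α] (B C : Matrix n n α) (i j : n) :
    (B * single i j (1 : α) * C) i j = B i i * C j j := by
  rw [mul_apply, Finset.sum_eq_single j]
  · rw [mul_single_apply_same, mul_one]
  · intro k _ hk
    rw [mul_single_apply_of_ne _ _ _ _ _ hk, zero_mul]
  · simp

theorem sum_mul_single_one_mul_apply [CommSemiring α] (B C : Matrix n n α) :
    ∑ i : n, ∑ j : n, (B * single i j (1 : α) * C) i j = B.trace * C.trace := by
  simp only [mul_single_one_mul_apply_same, trace, diag, Finset.sum_mul_sum]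

theorem hasFDerivAt_inv {𝕜 : Type*} [NontriviallyNormedField 𝕜] [CompleteSpace 𝕜]
    {A : Matrix n n 𝕜} (hA : IsUnit A) :
    HasFDerivAt (fun X : Matrix n n 𝕜 => X⁻¹)
      (-(LinearMap.mulLeft 𝕜 A⁻¹ ∘ₗ LinearMap.mulRight 𝕜 A⁻¹).toContinuousLinearMap) A := by
  -- The sup norm is not submultiplicative; the `L∞`-operator norm is, induces the same topology,
  -- and makes the matrices a complete normed algebra, where `hasFDerivAt_ringInverse` applies.
  let _ := Matrix.linftyOpNormedRing (n := n) (α := 𝕜)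
  let _ := Matrix.linftyOpNormedAlgebra (n := n) (R := 𝕜) (α := 𝕜)
  have : HasSummableGeomSeries (Matrix n n 𝕜) :=
    @instHasSummableGeomSeriesOfCompleteSpace _ _ (FiniteDimensional.complete 𝕜 _)
  rw [show (fun X : Matrix n n 𝕜 => X⁻¹) = Ring.inverse from funext nonsing_inv_eq_ringInverse]
  refine (hasFDerivAt_ringInverse (𝕜 := 𝕜) hA.unit).congr_fderiv
    (ContinuousLinearMap.ext fun H => ?_)
  change -((↑hA.unit⁻¹ : Matrix n n 𝕜) * H * (↑hA.unit⁻¹ : Matrix n n 𝕜)) = -(A⁻¹ * (H * A⁻¹))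
  rw [coe_units_inv, IsUnit.unit_spec, mul_assoc]

theorem hasFDerivAt_inv_const_sub {𝕜 : Type*} [NontriviallyNormedField 𝕜] [CompleteSpace 𝕜]
    {A M : Matrix n n 𝕜} (hAM : IsUnit (A - M)) :
    HasFDerivAt (fun X : Matrix n n 𝕜 => (A - X)⁻¹)
      (LinearMap.mulLeft 𝕜 (A - M)⁻¹ ∘ₗ LinearMap.mulRight 𝕜 (A - M)⁻¹).toContinuousLinearMap M := by
  refine ((hasFDerivAt_inv hAM).comp M ((hasFDerivAt_id M).const_sub A)).congr_fderiv ?_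
  ext H : 1
  change -((A - M)⁻¹ * (-H * (A - M)⁻¹)) = (A - M)⁻¹ * (H * (A - M)⁻¹)
  rw [neg_mul, mul_neg, neg_neg]

end Matrix

theorem HasFDerivAt.matrixDivergence_eq {N : ℕ}
    {F : Matrix (Fin N) (Fin N) ℂ → Matrix (Fin N) (Fin N) ℂ}
    {L : Matrix (Fin N) (Fin N) ℂ →L[ℂ] Matrix (Fin N) (Fin N) ℂ} {M : Matrix (Fin N) (Fin N) ℂ}
    (hF : HasFDerivAt F L M) :
    matrixDivergence F M = ∑ i, ∑ j, L (single i j 1) i j := by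
  refine Finset.sum_congr rfl fun i _ => Finset.sum_congr rfl fun j _ => ?_
  have hentry : HasFDerivAt (fun X => F X i j)
      ((entryLinearMap ℂ ℂ i j).toContinuousLinearMap ∘L L) M :=
    (entryLinearMap ℂ ℂ i j).toContinuousLinearMap.hasFDerivAt.comp M hF
  rw [hentry.fderiv]
  rfl

theorem jacobian_quadratic_change_of_variables_general (N : ℕ) (ξ : ℂ)
    (M : Matrix (Fin N) (Fin N) ℂ)
    (hM : IsUnit (ξ • (1 : Matrix (Fin N) (Fin N) ℂ) - M)) :
    DifferentiableAt ℂ (fun X : Matrix (Fin N) (Fin N) ℂ =>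
        (ξ • (1 : Matrix (Fin N) (Fin N) ℂ) - X)⁻¹ - ξ⁻¹ • (1 : Matrix (Fin N) (Fin N) ℂ)) M ∧
      matrixDivergence (fun X =>
          (ξ • (1 : Matrix (Fin N) (Fin N) ℂ) - X)⁻¹ - ξ⁻¹ • (1 : Matrix (Fin N) (Fin N) ℂ)) M
        = (((ξ • (1 : Matrix (Fin N) (Fin N) ℂ) - M)⁻¹).trace) ^ 2 := by
  have hF := (Matrix.hasFDerivAt_inv_const_sub hM).sub_const
    (ξ⁻¹ • (1 : Matrix (Fin N) (Fin N) ℂ))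
  refine ⟨hF.differentiableAt, ?_⟩
  rw [hF.matrixDivergence_eq, sq, ← Matrix.sum_mul_single_one_mul_apply]
  simp [mul_assoc]

/-- Jacobian of the quadratic change of variables (eq. MLE.2): for `ξ ≠ 0` and
`F(M) = (ξ·I − M)⁻¹ − ξ⁻¹·I`, whenever `ξ·I − M` is invertible, `F` is differentiable at `M`
and `div F (M) = ( tr((ξ·I − M)⁻¹) )²`. -/
theorem jacobian_quadratic_change_of_variables (N : ℕ) (ξ : ℂ) (hξ : ξ ≠ 0)
    (M : Matrix (Fin N) (Fin N) ℂ)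
    (hM : IsUnit (ξ • (1 : Matrix (Fin N) (Fin N) ℂ) - M)) :
    DifferentiableAt ℂ (fun X : Matrix (Fin N) (Fin N) ℂ =>
        (ξ • (1 : Matrix (Fin N) (Fin N) ℂ) - X)⁻¹ - ξ⁻¹ • (1 : Matrix (Fin N) (Fin N) ℂ)) M ∧
      matrixDivergence (fun X =>
          (ξ • (1 : Matrix (Fin N) (Fin N) ℂ) - X)⁻¹ - ξ⁻¹ • (1 : Matrix (Fin N) (Fin N) ℂ)) M
        = (((ξ • (1 : Matrix (Fin N) (Fin N) ℂ) - M)⁻¹).trace) ^ 2 :=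
  jacobian_quadratic_change_of_variables_general N ξ M hM
end

section
/- Jacobian of the cubic change of variables (eq. CMLE.1): fix ξ ∈ ℂ with ξ ≠ 0 and a constant c ∈ ℂ. For every N×N complex matrix M such that ξ·I − M is invertible, write R = (ξ·I − M)⁻¹; then the map F(M) = ((ξ·I − M)⁻¹ − ξ⁻¹·I) · ( tr((ξ·I − M)⁻¹) + c ) is differentiable at M and its divergence satisfies div F(M) = (tr R)³ + c·(tr R)² + tr(R³) − ξ⁻¹·tr(R²). -/
open Matrix

attribute [local instance] Matrix.normedAddCommGroup Matrix.normedSpace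

/-!
With `R = (ξ - M)⁻¹`, the derivative of `X ↦ (ξ - X)⁻¹` at `M` is `H ↦ R H R`, so by the product
rule `DF(M)[H] = (tr R + c) • R H R + tr (R H R) • (R - ξ⁻¹)`. At `H = E_ij` the `(i, j)` entry of
`R E_ij R` is `R_ii R_jj` and `tr (R E_ij R) = (R²)_ji`; summing over `i, j` gives
`(tr R + c) (tr R)² + tr ((R - ξ⁻¹) R²)`.
-/

namespace Matrix

section Algebra

variable {α : Type*} {l m n o : Type*} [Fintype m] [Fintype n] [DecidableEq m] [DecidableEq n]

theorem mul_single_mul_apply [Semiring α] (A : Matrix l m α) (B : Matrix n o α) (i : m) (j : n)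
    (c : α) (a : l) (b : o) :
    (A * single i j c * B) a b = A a i * c * B j b := by
  simp [mul_apply, single, ite_and]

theorem sum_sum_mul_single_one_mul_apply [Semiring α] (A B : Matrix n n α) :
    ∑ i, ∑ j, (A * single i j 1 * B : Matrix n n α) i j = trace A * trace B := by
  simp [mul_single_mul_apply, trace, Finset.sum_mul_sum]

theorem sum_sum_trace_mul_single_one_mul_mul_apply [CommSemiring α] (A B C : Matrix n n α) :
    ∑ i, ∑ j, trace (A * single i j 1 * B) * C i j = trace (C * B * A) := by
  simp only [trace_mul_cycle A, trace_mul_single, MulOpposite.op_one, one_smul]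
  simp only [trace, diag_apply, Matrix.mul_assoc C, mul_apply (M := C), mul_comm]

end Algebra

section Calculus

variable {𝕜 : Type*} [NontriviallyNormedField 𝕜] [CompleteSpace 𝕜] {n : Type*} [Fintype n]
  {E : Type*} [NormedAddCommGroup E] [NormedSpace 𝕜 E] {f : E → Matrix n n 𝕜} {x : E}

theorem _root_.DifferentiableAt.matrix_trace (hf : DifferentiableAt 𝕜 f x) :
    DifferentiableAt 𝕜 (fun y => trace (f y)) x :=
  (traceLinearMap n 𝕜 𝕜).toContinuousLinearMap.differentiableAt.comp x hf

theorem fderiv_trace_apply (hf : DifferentiableAt 𝕜 f x) (v : E) :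
    fderiv 𝕜 (fun y => trace (f y)) x v = trace (fderiv 𝕜 f x v) :=
  congrArg (· v)
    ((traceLinearMap n 𝕜 𝕜).toContinuousLinearMap.hasFDerivAt.comp x hf.hasFDerivAt).fderiv

theorem fderiv_trace_add_const_smul_sub_apply (hf : DifferentiableAt 𝕜 f x) (c : 𝕜)
    (B : Matrix n n 𝕜) (v : E) :
    fderiv 𝕜 (fun y => (trace (f y) + c) • (f y - B)) x v =
      (trace (f x) + c) • fderiv 𝕜 f x v + trace (fderiv 𝕜 f x v) • (f x - B) := by
  refine (congrArg (· v) (fderiv_fun_smul (hf.matrix_trace.add_const c) (hf.sub_const B))).trans ?_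
  simp only [_root_.add_apply, _root_.smul_apply, ContinuousLinearMap.smulRight_apply,
    fderiv_add_const, fderiv_trace_apply hf]
  congr 3
  exact fderiv_sub_const B

variable [DecidableEq n]

/- The entrywise sup norm is not submultiplicative, but the `linftyOp` normed-ring structure
induces definitionally the same topology, which is all that `fderiv` depends on. -/

theorem differentiableAt_inv {A : Matrix n n 𝕜} (hA : IsUnit A) :
    DifferentiableAt 𝕜 (fun X : Matrix n n 𝕜 => X⁻¹) A := by
  let R := Matrix.linftyOpNormedRing (n := n) (α := 𝕜)
  let := Matrix.linftyOpNormedAlgebra (R := 𝕜) (n := n) (α := 𝕜)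
  have : @CompleteSpace _ R.toUniformSpace := inferInstanceAs (CompleteSpace (n → n → 𝕜))
  simp_rw [nonsing_inv_eq_ringInverse]
  exact differentiableAt_inverse hA

theorem fderiv_inv_apply {A : Matrix n n 𝕜} (hA : IsUnit A) (H : Matrix n n 𝕜) :
    fderiv 𝕜 (fun X : Matrix n n 𝕜 => X⁻¹) A H = -(A⁻¹ * H * A⁻¹) := by
  let R := Matrix.linftyOpNormedRing (n := n) (α := 𝕜)
  let := Matrix.linftyOpNormedAlgebra (R := 𝕜) (n := n) (α := 𝕜)
  have : @CompleteSpace _ R.toUniformSpace := inferInstanceAs (CompleteSpace (n → n → 𝕜))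
  obtain ⟨u, rfl⟩ := hA
  simp_rw [nonsing_inv_eq_ringInverse, Ring.inverse_unit]
  refine (congrArg (· H) (fderiv_inverse (𝕜 := 𝕜) u)).trans ?_
  simp

variable {A M : Matrix n n 𝕜}

theorem differentiableAt_sub_inv (hM : IsUnit (A - M)) :
    DifferentiableAt 𝕜 (fun X : Matrix n n 𝕜 => (A - X)⁻¹) M :=
  (differentiableAt_inv hM).comp M ((differentiableAt_const A).sub differentiableAt_id)

theorem fderiv_sub_inv_apply (hM : IsUnit (A - M)) (H : Matrix n n 𝕜) :
    fderiv 𝕜 (fun X : Matrix n n 𝕜 => (A - X)⁻¹) M H = (A - M)⁻¹ * H * (A - M)⁻¹ := by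
  refine (congrArg (· H) ((differentiableAt_inv hM).hasFDerivAt.comp M
    ((hasFDerivAt_id M).const_sub A)).fderiv).trans ?_
  show fderiv 𝕜 (fun X : Matrix n n 𝕜 => X⁻¹) (A - M) (-H) = _
  simp [fderiv_inv_apply hM]

end Calculus

end Matrix

theorem matrixDivergence_eq_sum_of_fderiv_apply {N : ℕ}
    {F L : Matrix (Fin N) (Fin N) ℂ → Matrix (Fin N) (Fin N) ℂ} {M : Matrix (Fin N) (Fin N) ℂ}
    (hF : DifferentiableAt ℂ F M) (hL : ∀ H, fderiv ℂ F M H = L H) :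
    matrixDivergence F M = ∑ i, ∑ j, L (single i j 1) i j := by
  refine Finset.sum_congr rfl fun i _ => Finset.sum_congr rfl fun j _ => ?_
  rw [← hL]
  have hrow := fderiv_apply (ι := Fin N) (F' := fun _ => Fin N → ℂ) (Φ := F) hF i
  have hentry := fderiv_apply (ι := Fin N) (F' := fun _ => ℂ) (Φ := fun X => F X i)
    ((differentiableAt_apply i _).comp M hF) j
  exact (congrArg (· (single i j 1)) hentry).trans (congrArg (fun L => L (single i j 1) j) hrow)

theorem jacobian_cubic_change_of_variables_general (N : ℕ) (ξ : ℂ) (c : ℂ)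
    (M : Matrix (Fin N) (Fin N) ℂ)
    (hM : IsUnit (ξ • (1 : Matrix (Fin N) (Fin N) ℂ) - M)) :
    DifferentiableAt ℂ (fun X : Matrix (Fin N) (Fin N) ℂ =>
        (((ξ • (1 : Matrix (Fin N) (Fin N) ℂ) - X)⁻¹).trace + c) •
          ((ξ • (1 : Matrix (Fin N) (Fin N) ℂ) - X)⁻¹ - ξ⁻¹ • (1 : Matrix (Fin N) (Fin N) ℂ))) M ∧
      matrixDivergence (fun X =>
          (((ξ • (1 : Matrix (Fin N) (Fin N) ℂ) - X)⁻¹).trace + c) •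
            ((ξ • (1 : Matrix (Fin N) (Fin N) ℂ) - X)⁻¹ - ξ⁻¹ • (1 : Matrix (Fin N) (Fin N) ℂ))) M
        = (((ξ • (1 : Matrix (Fin N) (Fin N) ℂ) - M)⁻¹).trace) ^ 3
          + c * (((ξ • (1 : Matrix (Fin N) (Fin N) ℂ) - M)⁻¹).trace) ^ 2
          + ((ξ • (1 : Matrix (Fin N) (Fin N) ℂ) - M)⁻¹ *
              (ξ • (1 : Matrix (Fin N) (Fin N) ℂ) - M)⁻¹ *
              (ξ • (1 : Matrix (Fin N) (Fin N) ℂ) - M)⁻¹).trace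
          - ξ⁻¹ * ((ξ • (1 : Matrix (Fin N) (Fin N) ℂ) - M)⁻¹ *
              (ξ • (1 : Matrix (Fin N) (Fin N) ℂ) - M)⁻¹).trace := by
  set R := (ξ • (1 : Matrix (Fin N) (Fin N) ℂ) - M)⁻¹
  have hg := differentiableAt_sub_inv hM
  have hF := (hg.matrix_trace.add_const c).fun_smul (hg.sub_const (ξ⁻¹ • 1))
  refine ⟨hF, (matrixDivergence_eq_sum_of_fderiv_apply hF
    (L := fun H => (R.trace + c) • (R * H * R) + (R * H * R).trace • (R - ξ⁻¹ • 1))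
    fun H => ?_).trans ?_⟩
  -- `erw`: the two `fderiv`s carry different, definitionally equal topologies on matrices
  · exact (fderiv_trace_add_const_smul_sub_apply hg c _ H).trans (by erw [fderiv_sub_inv_apply hM])
  simp only [Matrix.add_apply, Matrix.smul_apply, smul_eq_mul, Finset.sum_add_distrib,
    ← Finset.mul_sum, sum_sum_mul_single_one_mul_apply, sum_sum_trace_mul_single_one_mul_mul_apply,
    Matrix.sub_mul, Matrix.smul_mul, Matrix.one_mul, trace_sub, trace_smul]
  ring

/-- Jacobian of the cubic change of variables (eq. CMLE.1): for `ξ ≠ 0`, a constant `c ∈ ℂ`,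
and `F(M) = ((ξ·I − M)⁻¹ − ξ⁻¹·I) · ( tr((ξ·I − M)⁻¹) + c )`, whenever `ξ·I − M` is
invertible, `F` is differentiable at `M` and, writing `R = (ξ·I − M)⁻¹`,
`div F (M) = (tr R)³ + c·(tr R)² + tr(R³) − ξ⁻¹·tr(R²)`. -/
theorem jacobian_cubic_change_of_variables (N : ℕ) (ξ : ℂ) (hξ : ξ ≠ 0) (c : ℂ)
    (M : Matrix (Fin N) (Fin N) ℂ)
    (hM : IsUnit (ξ • (1 : Matrix (Fin N) (Fin N) ℂ) - M)) :
    DifferentiableAt ℂ (fun X : Matrix (Fin N) (Fin N) ℂ =>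
        (((ξ • (1 : Matrix (Fin N) (Fin N) ℂ) - X)⁻¹).trace + c) •
          ((ξ • (1 : Matrix (Fin N) (Fin N) ℂ) - X)⁻¹ - ξ⁻¹ • (1 : Matrix (Fin N) (Fin N) ℂ))) M ∧
      matrixDivergence (fun X =>
          (((ξ • (1 : Matrix (Fin N) (Fin N) ℂ) - X)⁻¹).trace + c) •
            ((ξ • (1 : Matrix (Fin N) (Fin N) ℂ) - X)⁻¹ - ξ⁻¹ • (1 : Matrix (Fin N) (Fin N) ℂ))) M
        = (((ξ • (1 : Matrix (Fin N) (Fin N) ℂ) - M)⁻¹).trace) ^ 3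
          + c * (((ξ • (1 : Matrix (Fin N) (Fin N) ℂ) - M)⁻¹).trace) ^ 2
          + ((ξ • (1 : Matrix (Fin N) (Fin N) ℂ) - M)⁻¹ *
              (ξ • (1 : Matrix (Fin N) (Fin N) ℂ) - M)⁻¹ *
              (ξ • (1 : Matrix (Fin N) (Fin N) ℂ) - M)⁻¹).trace
          - ξ⁻¹ * ((ξ • (1 : Matrix (Fin N) (Fin N) ℂ) - M)⁻¹ *
              (ξ • (1 : Matrix (Fin N) (Fin N) ℂ) - M)⁻¹).trace :=
  jacobian_cubic_change_of_variables_general N ξ c M hM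
end
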